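/- arXiv:2204.11702 — 3 statements merged into one kernel-verified Lean document; each statement's English description precedes it below -/
import Mathlib

section
/- Let n ∈ ℕ and let x, t ⊆ {0,…,n−1}. Then ∑_{s ⊆ {0,…,n−1}} (s·x) · (−1)^{|s∩t|} = 2^(n−1) · ([t = ∅] − [t = x]) as integers, where [P] is 1 if P holds and 0 otherwise. -/
open Finset
open scoped symmDiff

private lemma key_sum (n : ℕ) (u : Finset (Fin n)) :
    (∑ s : Finset (Fin n), (-1 : ℤ) ^ (s ∩ u).card) =
      if u = ∅ then 2 ^ n else 0 := by
  have h : ∀ s : Finset (Fin n),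
      (-1 : ℤ) ^ (s ∩ u).card = ∏ i ∈ s, (if i ∈ u then (-1 : ℤ) else 1) := by
    intro s
    rw [Finset.prod_ite, Finset.prod_const, Finset.prod_const, one_pow, mul_one,
      Finset.filter_mem_eq_inter]
  simp only [h]
  have hsum : (∑ s : Finset (Fin n), ∏ i ∈ s, (if i ∈ u then (-1 : ℤ) else 1)) =
      ∏ i ∈ Finset.univ, ((if i ∈ u then (-1 : ℤ) else 1) + 1) := by
    rw [Finset.prod_add]
    rw [← Finset.powerset_univ]
    exact Finset.sum_congr rfl fun s _ => by simp
  rw [hsum]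
  by_cases hu : u = ∅
  · simp [hu, Finset.card_univ]
  · rw [if_neg hu]
    obtain ⟨i, hi⟩ := Finset.nonempty_iff_ne_empty.2 hu
    exact Finset.prod_eq_zero (Finset.mem_univ i) (by simp [hi])

private lemma card_symmDiff_parity {α : Type*} [DecidableEq α] (a b : Finset α) :
    (-1 : ℤ) ^ a.card * (-1 : ℤ) ^ b.card = (-1 : ℤ) ^ (a ∆ b).card := by
  have h1 : (a \ b).card + (a ∩ b).card = a.card := Finset.card_sdiff_add_card_inter a b
  have h2 : (b \ a).card + (b ∩ a).card = b.card := Finset.card_sdiff_add_card_inter b a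
  have hd : (a ∆ b).card = (a \ b).card + (b \ a).card := by
    rw [symmDiff_def]
    exact Finset.card_union_of_disjoint disjoint_sdiff_sdiff
  have hba : (b ∩ a).card = (a ∩ b).card := by rw [Finset.inter_comm]
  have : a.card + b.card = (a ∆ b).card + 2 * (a ∩ b).card := by omega
  rw [← pow_add, this, pow_add, pow_mul, neg_one_sq, one_pow, mul_one]

private lemma two_mul_mod_two (c : ℕ) :
    (2 : ℤ) * ((c % 2 : ℕ) : ℤ) = 1 - (-1 : ℤ) ^ c := by
  rcases Nat.even_or_odd c with h | h
  · rw [Nat.even_iff.1 h, h.neg_one_pow]; simp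
  · rw [Nat.odd_iff.1 h, h.neg_one_pow]; norm_num

/-- `∑_{s ⊆ {0,…,n−1}} (s·x)·(−1)^{|s∩t|} = 2^(n−1)·([t = ∅] − [t = x])`,
where `s·x` is the parity of `|s ∩ x|`. -/
theorem sum_parity_mul_sign (n : ℕ) (x t : Finset (Fin n)) :
    (∑ s : Finset (Fin n), (((s ∩ x).card % 2 : ℕ) : ℤ) * (-1 : ℤ) ^ (s ∩ t).card) =
      2 ^ (n - 1) * ((if t = ∅ then 1 else 0) - (if t = x then 1 else 0)) := by
  have key : (2 : ℤ) * (∑ s : Finset (Fin n),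
      (((s ∩ x).card % 2 : ℕ) : ℤ) * (-1 : ℤ) ^ (s ∩ t).card) =
      2 ^ n * ((if t = ∅ then 1 else 0) - (if t = x then 1 else 0)) := by
    rw [Finset.mul_sum]
    have step : ∀ s : Finset (Fin n),
        (2 : ℤ) * ((((s ∩ x).card % 2 : ℕ) : ℤ) * (-1 : ℤ) ^ (s ∩ t).card) =
        (-1 : ℤ) ^ (s ∩ t).card - (-1 : ℤ) ^ (s ∩ (x ∆ t)).card := by
      intro s
      rw [← mul_assoc, two_mul_mod_two, sub_mul, one_mul,
        card_symmDiff_parity]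
      congr 1
      rw [show s ∩ (x ∆ t) = (s ∩ x) ∆ (s ∩ t) from inf_symmDiff_distrib_left s x t]
    rw [Finset.sum_congr rfl fun s _ => step s, Finset.sum_sub_distrib,
      key_sum, key_sum]
    have hxt : (x ∆ t = ∅) ↔ (t = x) := by
      rw [Finset.symmDiff_eq_empty]; exact eq_comm
    simp only [hxt]
    split_ifs <;> ring
  rcases Nat.eq_zero_or_pos n with hn | hn
  · subst hn
    have hx : x = ∅ := Subsingleton.elim _ _
    have ht : t = ∅ := Subsingleton.elim _ _
    subst hx; subst ht
    simp only [if_pos rfl, sub_self, mul_zero] at key ⊢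
    linarith
  · have h2 : (2 : ℤ) ^ n = 2 * 2 ^ (n - 1) := by
      rw [← pow_succ']
      congr 1
      omega
    rw [h2, mul_assoc] at key
    exact mul_left_cancel₀ (by norm_num) key
end

section
/- Let n ∈ ℕ and g : Finset (Fin n) → ℝ. Then for every x ⊆ {0,…,n−1}: g(x) = g(∅) + ∑_{s ⊆ {0,…,n−1}} (s·x) · ĝ(s). -/
/-- The additive Fourier transform `ĝ(s) = −2^{1−n}·∑_t (−1)^{|s∩t|} g(t)`. -/
noncomputable def addFourier (n : ℕ) (g : Finset (Fin n) → ℝ) (s : Finset (Fin n)) : ℝ :=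
  -(2 : ℝ) ^ ((1 : ℤ) - n) * ∑ t : Finset (Fin n), (-1 : ℝ) ^ (s ∩ t).card * g t

lemma pow_card_inter_eq_prod {n : ℕ} (u s : Finset (Fin n)) :
    (-1:ℝ)^(s ∩ u).card = ∏ i ∈ s, (if i ∈ u then (-1:ℝ) else 1) := by
  rw [Finset.prod_ite, Finset.prod_const, Finset.prod_const, one_pow, mul_one,
    Finset.filter_mem_eq_inter]

lemma key (n : ℕ) (x t : Finset (Fin n)) :
    ∑ s : Finset (Fin n), (-1:ℝ)^(s ∩ x).card * (-1:ℝ)^(s ∩ t).card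
      = if x = t then (2:ℝ)^n else 0 := by
  have hc : ∀ s : Finset (Fin n), (-1:ℝ)^(s ∩ x).card * (-1:ℝ)^(s ∩ t).card
      = ∏ i ∈ s, ((if i ∈ x then (-1:ℝ) else 1) * (if i ∈ t then (-1:ℝ) else 1)) := by
    intro s
    rw [pow_card_inter_eq_prod, pow_card_inter_eq_prod, ← Finset.prod_mul_distrib]
  simp only [hc]
  have := Finset.prod_add (fun i : Fin n => (if i ∈ x then (-1:ℝ) else 1) * (if i ∈ t then (-1:ℝ) else 1)) (fun _ => (1:ℝ)) Finset.univ
  simp only [Finset.prod_const_one, mul_one, Finset.powerset_univ] at this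
  rw [← this]
  by_cases hxt : x = t
  · subst hxt
    rw [if_pos rfl]
    have : ∀ i : Fin n, (if i ∈ x then (-1:ℝ) else 1) * (if i ∈ x then (-1:ℝ) else 1) + 1 = 2 := by
      intro i; split_ifs <;> norm_num
    simp only [this, Finset.prod_const, Finset.card_univ, Fintype.card_fin]
  · rw [if_neg hxt]
    have : ∃ i : Fin n, ¬ (i ∈ x ↔ i ∈ t) := by
      by_contra h
      push_neg at h
      exact hxt (Finset.ext h)
    obtain ⟨i, hi⟩ := this
    apply Finset.prod_eq_zero (Finset.mem_univ i)
    by_cases h1 : i ∈ x <;> by_cases h2 : i ∈ t <;> simp [h1, h2] at hi ⊢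

/-- Additive Fourier inversion: `g(x) = g(∅) + ∑_s (s·x)·ĝ(s)`,
where `s·x` is the parity of `|s ∩ x|`. -/
theorem addFourier_inversion (n : ℕ) (g : Finset (Fin n) → ℝ) :
    ∀ x : Finset (Fin n),
      g x = g ∅ + ∑ s : Finset (Fin n), (((s ∩ x).card % 2 : ℕ) : ℝ) * addFourier n g s := by
  intro x
  have hm : ∀ s : Finset (Fin n),
      (((s ∩ x).card % 2 : ℕ) : ℝ) = (1 - (-1:ℝ)^(s ∩ x).card)/2 := by
    intro s
    rcases Nat.even_or_odd (s ∩ x).card with h | h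
    · rw [Nat.even_iff.mp h, h.neg_one_pow]; norm_num
    · rw [Nat.odd_iff.mp h, h.neg_one_pow]; norm_num
  have hA : ∀ t : Finset (Fin n), ∑ s : Finset (Fin n), (-1:ℝ)^(s ∩ t).card
      = if ∅ = t then (2:ℝ)^n else 0 := fun t => by
    simpa using key n ∅ t
  have step : ∑ s : Finset (Fin n), (((s ∩ x).card % 2 : ℕ) : ℝ) * addFourier n g s
      = -((2:ℝ)^((1:ℤ) - n)/2) * ∑ t : Finset (Fin n),
          ((∑ s : Finset (Fin n), (-1:ℝ)^(s ∩ t).card)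
            - ∑ s : Finset (Fin n), (-1:ℝ)^(s ∩ x).card * (-1:ℝ)^(s ∩ t).card) * g t := by
    simp only [hm, addFourier, Finset.mul_sum]
    rw [Finset.sum_comm]
    refine Finset.sum_congr rfl fun t _ => ?_
    rw [← Finset.sum_sub_distrib, Finset.sum_mul, Finset.mul_sum]
    refine Finset.sum_congr rfl fun s _ => ?_
    ring
  rw [step]
  simp only [hA, key n x, sub_mul, Finset.sum_sub_distrib, ite_mul, zero_mul,
    Finset.sum_ite_eq, Finset.mem_univ, if_true]
  have hD : (2:ℝ)^((1:ℤ) - n) * (2:ℝ)^(n:ℕ) = 2 := by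
    rw [← zpow_natCast (2:ℝ) n, ← zpow_add₀ (by norm_num : (2:ℝ) ≠ 0)]
    norm_num
  linear_combination (-(g x - g ∅)/2) * hD
end

section
/- Let n ∈ ℕ and g : Finset (Fin n) → ℝ. Then for every x ⊆ {0,…,n−1}: ĝ(x) = −(−1)^{|x|} · ∑_{t : x ⊆ t ⊆ {0,…,n−1}} 2^{1−|t|} · g̃(t). -/
set_option maxHeartbeats 1000000

/-- The additive Möbius transform `g̃(s) = ∑_{t ⊆ s} (−1)^{|t|+|s|} g(t)`. -/
def addMobius (n : ℕ) (g : Finset (Fin n) → ℝ) (s : Finset (Fin n)) : ℝ :=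
  ∑ t ∈ s.powerset, (-1 : ℝ) ^ (t.card + s.card) * g t

lemma sum_powerset_pow_card {α : Type*} [DecidableEq α] (A : Finset α) (r : ℝ) :
    ∑ v ∈ A.powerset, r ^ v.card = (r + 1) ^ A.card := by
  have h := Finset.prod_add (fun _ : α => r) (fun _ : α => (1 : ℝ)) A
  simp only [Finset.prod_const, one_pow, mul_one] at h
  rw [← h]

lemma sum_supersets (n : ℕ) (s : Finset (Fin n)) :
    ∑ t ∈ Finset.univ.filter (fun t : Finset (Fin n) => s ⊆ t),
        (2 : ℝ) ^ ((1 : ℤ) - t.card) * (-1 : ℝ) ^ t.card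
      = (-1 : ℝ) ^ s.card * (2 : ℝ) ^ ((1 : ℤ) - n) := by
  have hcard : s.card ≤ n := by
    simpa using Finset.card_le_univ s
  have key : ∑ t ∈ Finset.univ.filter (fun t : Finset (Fin n) => s ⊆ t),
        (2 : ℝ) ^ ((1 : ℤ) - t.card) * (-1 : ℝ) ^ t.card
      = ∑ v ∈ sᶜ.powerset,
        (2 : ℝ) ^ ((1 : ℤ) - (v ∪ s).card) * (-1 : ℝ) ^ (v ∪ s).card := by
    refine Finset.sum_nbij' (i := fun t => t \ s) (j := fun v => v ∪ s) ?_ ?_ ?_ ?_ ?_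
    · intro t ht
      simp only [Finset.mem_filter, Finset.mem_univ, true_and] at ht
      simp only [Finset.mem_powerset]
      intro a ha
      simp only [Finset.mem_sdiff] at ha
      simp [ha.2]
    · intro v hv
      simp only [Finset.mem_filter, Finset.mem_univ, true_and]
      exact Finset.subset_union_right
    · intro t ht
      simp only [Finset.mem_filter, Finset.mem_univ, true_and] at ht
      exact Finset.sdiff_union_of_subset ht
    · intro v hv
      simp only [Finset.mem_powerset] at hv
      exact Finset.union_sdiff_cancel_right (Finset.disjoint_left.2 fun a hav has =>
        (Finset.mem_compl.1 (hv hav)) has)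
    · intro t ht
      simp only [Finset.mem_filter, Finset.mem_univ, true_and] at ht
      rw [Finset.sdiff_union_of_subset ht]
  rw [key]
  have hterm : ∀ v ∈ sᶜ.powerset,
      (2 : ℝ) ^ ((1 : ℤ) - (v ∪ s).card) * (-1 : ℝ) ^ (v ∪ s).card
        = ((-1 : ℝ) ^ s.card * (2 : ℝ) ^ ((1 : ℤ) - s.card)) * (-(1/2) : ℝ) ^ v.card := by
    intro v hv
    simp only [Finset.mem_powerset] at hv
    have hdisj : Disjoint v s := Finset.disjoint_left.2 fun a hav has =>
      (Finset.mem_compl.1 (hv hav)) has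
    rw [Finset.card_union_of_disjoint hdisj]
    have h2 : (2 : ℝ) ≠ 0 := two_ne_zero
    have : ((1 : ℤ) - (v.card + s.card : ℕ)) = ((1 : ℤ) - s.card) + (-(v.card : ℤ)) := by
      push_cast; ring
    rw [this, zpow_add₀ h2, pow_add]
    rw [zpow_neg, zpow_natCast]
    have : (-(1/2) : ℝ) ^ v.card = (-1 : ℝ) ^ v.card / 2 ^ v.card := by
      rw [neg_pow, div_pow, one_pow]
      ring
    rw [this]
    field_simp
  rw [Finset.sum_congr rfl hterm, ← Finset.mul_sum, sum_powerset_pow_card]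
  have hc : sᶜ.card = n - s.card := by
    rw [Finset.card_compl]
    simp
  rw [hc]
  have : (-(1/2) : ℝ) + 1 = 1/2 := by norm_num
  rw [this]
  have h2 : (2 : ℝ) ≠ 0 := two_ne_zero
  have hhalf : ((1:ℝ)/2) ^ (n - s.card) = (2 : ℝ) ^ (-((n - s.card : ℕ) : ℤ)) := by
    rw [zpow_neg, zpow_natCast, one_div, inv_pow]
  rw [hhalf, mul_assoc, ← zpow_add₀ h2]
  congr 2
  omega

/-- `ĝ(x) = −(−1)^{|x|}·∑_{t ⊇ x} 2^{1−|t|}·g̃(t)`. -/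
theorem addFourier_eq_sum_addMobius (n : ℕ) (g : Finset (Fin n) → ℝ) :
    ∀ x : Finset (Fin n),
      addFourier n g x =
        -(-1 : ℝ) ^ x.card *
          ∑ t ∈ Finset.univ.filter (fun t : Finset (Fin n) => x ⊆ t),
            (2 : ℝ) ^ ((1 : ℤ) - t.card) * addMobius n g t := by
  intro x
  unfold addFourier addMobius
  -- expand RHS and swap sums
  have swap : ∑ t ∈ Finset.univ.filter (fun t : Finset (Fin n) => x ⊆ t),
        (2 : ℝ) ^ ((1 : ℤ) - t.card) *
          ∑ u ∈ t.powerset, (-1 : ℝ) ^ (u.card + t.card) * g u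
      = ∑ u : Finset (Fin n), ∑ t ∈ Finset.univ.filter
          (fun t : Finset (Fin n) => x ∪ u ⊆ t),
          (2 : ℝ) ^ ((1 : ℤ) - t.card) * ((-1 : ℝ) ^ (u.card + t.card) * g u) := by
    simp_rw [Finset.mul_sum]
    refine Finset.sum_comm' ?_
    intro t u
    simp only [Finset.mem_filter, Finset.mem_univ, true_and, Finset.mem_powerset,
      Finset.union_subset_iff, and_true]
  rw [swap]
  -- evaluate the inner sum using sum_supersets
  have inner : ∀ u : Finset (Fin n),
      ∑ t ∈ Finset.univ.filter (fun t : Finset (Fin n) => x ∪ u ⊆ t),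
          (2 : ℝ) ^ ((1 : ℤ) - t.card) * ((-1 : ℝ) ^ (u.card + t.card) * g u)
        = ((-1 : ℝ) ^ u.card * g u) *
            ((-1 : ℝ) ^ (x ∪ u).card * (2 : ℝ) ^ ((1 : ℤ) - n)) := by
    intro u
    rw [← sum_supersets n (x ∪ u), Finset.mul_sum]
    refine Finset.sum_congr rfl fun t ht => ?_
    rw [pow_add]
    ring
  rw [Finset.sum_congr rfl fun u _ => inner u]
  rw [neg_mul, neg_mul, neg_inj, Finset.mul_sum, Finset.mul_sum]
  refine Finset.sum_congr rfl fun u _ => ?_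
  have hpar : (-1 : ℝ) ^ x.card * ((-1 : ℝ) ^ u.card * (-1 : ℝ) ^ (x ∪ u).card)
      = (-1 : ℝ) ^ (x ∩ u).card := by
    rw [← pow_add, ← pow_add]
    have h : x.card + (u.card + (x ∪ u).card) = (x ∩ u).card + 2 * (x ∪ u).card := by
      have := Finset.card_union_add_card_inter x u
      omega
    rw [h, pow_add, pow_mul, neg_one_sq, one_pow, mul_one]
  calc (2 : ℝ) ^ ((1:ℤ) - n) * ((-1:ℝ) ^ (x ∩ u).card * g u)
      = (2 : ℝ) ^ ((1:ℤ) - n) *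
        ((-1:ℝ) ^ x.card * ((-1:ℝ) ^ u.card * (-1:ℝ) ^ (x ∪ u).card) * g u) := by rw [hpar]
    _ = (-1:ℝ) ^ x.card *
        ((-1:ℝ) ^ u.card * g u * ((-1:ℝ) ^ (x ∪ u).card * (2:ℝ) ^ ((1:ℤ) - n))) := by ring
end
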